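/- arXiv:2110.04967 — 4 statements merged into one kernel-verified Lean document; each statement's English description precedes it below -/
import Mathlib

section
/- For any dual quaternions â and b̂, the norm of their product satisfies ‖â b̂‖ ≤ √(3/2) · ‖â‖ · ‖b̂‖. -/
/-! Writing `p, q, r, s` for the norms of `a_r, a_d, b_r, b_d`, the product has real part of norm
at most `p r` and dual part of norm at most `p s + q r`. The constant `3/2` then comes from
`3/2 (p² + q²)(r² + s²) - (p r)² - (p s + q r)² = ½ (p s - q r)² + ½ (p r - q s)² + (q s)²`. -/

/-- The norm `‖a_r + ε a_d‖ = √(‖a_r‖² + ‖a_d‖²)` of a dual quaternion. -/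
noncomputable def dualQuatNorm (x : DualNumber (Quaternion ℝ)) : ℝ :=
  Real.sqrt (‖x.fst‖ ^ 2 + ‖x.snd‖ ^ 2)

theorem sq_mul_add_sq_add_le (p q r s : ℝ) :
    (p * r) ^ 2 + (p * s + q * r) ^ 2 ≤ 3 / 2 * ((p ^ 2 + q ^ 2) * (r ^ 2 + s ^ 2)) := by
  nlinarith [sq_nonneg (p * s - q * r), sq_nonneg (p * r - q * s), sq_nonneg (q * s)]

namespace DualNumber

variable {A : Type*} [SeminormedRing A]

theorem norm_fst_mul_le (a b : DualNumber A) : ‖(a * b).fst‖ ≤ ‖a.fst‖ * ‖b.fst‖ :=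
  norm_mul_le _ _

theorem norm_snd_mul_le (a b : DualNumber A) :
    ‖(a * b).snd‖ ≤ ‖a.fst‖ * ‖b.snd‖ + ‖a.snd‖ * ‖b.fst‖ := by
  rw [TrivSqZeroExt.snd_mul, smul_eq_mul, op_smul_eq_mul]
  exact (norm_add_le _ _).trans (add_le_add (norm_mul_le _ _) (norm_mul_le _ _))

theorem norm_fst_mul_sq_add_norm_snd_mul_sq_le (a b : DualNumber A) :
    ‖(a * b).fst‖ ^ 2 + ‖(a * b).snd‖ ^ 2 ≤
      3 / 2 * ((‖a.fst‖ ^ 2 + ‖a.snd‖ ^ 2) * (‖b.fst‖ ^ 2 + ‖b.snd‖ ^ 2)) := by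
  calc ‖(a * b).fst‖ ^ 2 + ‖(a * b).snd‖ ^ 2
      ≤ (‖a.fst‖ * ‖b.fst‖) ^ 2 + (‖a.fst‖ * ‖b.snd‖ + ‖a.snd‖ * ‖b.fst‖) ^ 2 := by
        gcongr
        exacts [norm_fst_mul_le a b, norm_snd_mul_le a b]
    _ ≤ _ := sq_mul_add_sq_add_le _ _ _ _

end DualNumber

/-- For any dual quaternions `â`, `b̂`, one has `‖â b̂‖ ≤ √(3/2) ‖â‖ ‖b̂‖`. -/
theorem dualQuatNorm_mul_le (a b : DualNumber (Quaternion ℝ)) :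
    dualQuatNorm (a * b) ≤ Real.sqrt (3 / 2) * dualQuatNorm a * dualQuatNorm b := by
  calc dualQuatNorm (a * b)
      ≤ Real.sqrt (3 / 2 * ((‖a.fst‖ ^ 2 + ‖a.snd‖ ^ 2) * (‖b.fst‖ ^ 2 + ‖b.snd‖ ^ 2))) :=
        Real.sqrt_le_sqrt (DualNumber.norm_fst_mul_sq_add_norm_snd_mul_sq_le a b)
    _ = Real.sqrt (3 / 2) * dualQuatNorm a * dualQuatNorm b := by
        rw [Real.sqrt_mul (by norm_num), Real.sqrt_mul (by positivity), mul_assoc]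
        rfl
end

section
/- Let ω̂ = ω + ε v be a pure dual quaternion, i.e. ω and v are quaternions with zero real part, identified with vectors in ℝ³. Then for every natural number m ≥ 1, the even power of ω̂ is given by ω̂^(2m) = (−1)^m ( ‖ω‖^(2m) + ε ( 2m · ‖ω‖^(2(m−1)) · ⟨ω, v⟩ ) ), where the real and dual parts on the right-hand side are scalar quaternions and ‖·‖, ⟨·,·⟩ denote the Euclidean norm and inner product on ℝ³. -/
open RealInnerProductSpace

/-- The dual quaternion `a + ε b` with real part `a` and dual part `b`. -/
noncomputable def dq (a b : Quaternion ℝ) : DualNumber (Quaternion ℝ) :=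
  TrivSqZeroExt.inl a + TrivSqZeroExt.inr b

theorem dq_mul (a b c d : Quaternion ℝ) : dq a b * dq c d = dq (a*c) (a*d + b*c) := by
  simp only [dq, mul_add, add_mul, TrivSqZeroExt.inl_mul_inl, TrivSqZeroExt.inl_mul_inr,
    TrivSqZeroExt.inr_mul_inl, TrivSqZeroExt.inr_mul_inr, smul_eq_mul,
    op_smul_eq_mul, ← TrivSqZeroExt.inr_add, add_zero, add_assoc,
    add_comm (b*c) (a*d)]

theorem dq_scalar_pow (r s : ℝ) (k : ℕ) :
    dq ((r:Quaternion ℝ)) ((s:Quaternion ℝ)) ^ (k+1) =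
      dq (((r^(k+1) : ℝ) : Quaternion ℝ)) ((((k+1) * r^k * s : ℝ) : Quaternion ℝ)) := by
  induction k with
  | zero => simp
  | succ k ih =>
      rw [pow_succ, ih, dq_mul]
      simp only [← Quaternion.coe_mul, ← Quaternion.coe_add]
      congr 1 <;> · rw [Quaternion.coe_inj]; push_cast; ring

theorem pure_mul_self (ω : Quaternion ℝ) (hω : ω.re = 0) :
    ω * ω = (((-‖ω‖^2 : ℝ)) : Quaternion ℝ) := by
  ext <;> simp [Quaternion.re_mul, Quaternion.imI_mul, Quaternion.imJ_mul, Quaternion.imK_mul,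
    hω, ← Quaternion.normSq_eq_norm_mul_self, Quaternion.normSq_def', sq] <;> ring

theorem pure_mul_add (ω v : Quaternion ℝ) (hω : ω.re = 0) (hv : v.re = 0) :
    ω * v + v * ω = (((-(2*⟪ω,v⟫) : ℝ)) : Quaternion ℝ) := by
  ext <;> simp [Quaternion.re_mul, Quaternion.imI_mul, Quaternion.imJ_mul, Quaternion.imK_mul,
    hω, hv, Quaternion.inner_def] <;> ring

/-- For a pure dual quaternion `ω̂ = ω + ε v` (the quaternions `ω`, `v` have zero
real part, i.e. are vectors in `ℝ³`) and any `m ≥ 1`,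
`ω̂^(2m) = (−1)^m (‖ω‖^(2m) + ε (2m ‖ω‖^(2(m−1)) ⟨ω, v⟩))`, where the real and
dual parts of the right-hand side are scalar quaternions. -/
theorem pure_dualQuat_even_pow (ω v : Quaternion ℝ) (hω : ω.re = 0) (hv : v.re = 0)
    (m : ℕ) (hm : 1 ≤ m) :
    (dq ω v) ^ (2 * m) =
      dq ((((-1 : ℝ) ^ m * ‖ω‖ ^ (2 * m) : ℝ)) : Quaternion ℝ)
        ((((-1 : ℝ) ^ m * (2 * m * ‖ω‖ ^ (2 * (m - 1)) * ⟪ω, v⟫) : ℝ)) : Quaternion ℝ) := by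
  obtain ⟨k, rfl⟩ : ∃ k, m = k + 1 := ⟨m - 1, (Nat.succ_pred_eq_of_pos hm).symm⟩
  have hsq : (dq ω v) ^ 2 = dq (((-‖ω‖^2 : ℝ)) : Quaternion ℝ) (((-(2*⟪ω,v⟫) : ℝ)) : Quaternion ℝ) := by
    rw [sq, dq_mul, pure_mul_self ω hω, pure_mul_add ω v hω hv]
  rw [pow_mul, hsq, dq_scalar_pow]
  congr 1 <;> rw [Quaternion.coe_inj]
  · rw [pow_mul]; ring
  · simp only [Nat.add_sub_cancel]
    rw [pow_mul]; push_cast; ring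
end

section
/- Let q̂ be a dual quaternion and let ω̂ = ω + ε v be a pure dual quaternion, i.e. ω and v are quaternions with zero real part, identified with vectors in ℝ³, and suppose ‖ω‖² + ‖v‖² < 2/3. Then for every natural number k such that q̂ · ω̂^k ≠ 0, the strict inequality ‖q̂ · ω̂^(k+1)‖ < ‖q̂ · ω̂^k‖ holds. -/
lemma dq_fst (a b : Quaternion ℝ) : (dq a b).fst = a := by simp [dq]

lemma dq_snd (a b : Quaternion ℝ) : (dq a b).snd = b := by simp [dq]

/-- For any dual quaternion `q̂` and any pure dual quaternion `ω̂ = ω + ε v`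
(the quaternions `ω`, `v` have zero real part, i.e. are vectors in `ℝ³`) with
`‖ω‖² + ‖v‖² < 2/3`, whenever `q̂ ω̂^k ≠ 0` one has the strict decrease
`‖q̂ ω̂^(k+1)‖ < ‖q̂ ω̂^k‖`. -/
theorem observables_norm_strict_decrease (q : DualNumber (Quaternion ℝ))
    (ω v : Quaternion ℝ) (hω : ω.re = 0) (hv : v.re = 0)
    (hn : ‖ω‖ ^ 2 + ‖v‖ ^ 2 < 2 / 3) :
    ∀ k : ℕ, q * (dq ω v) ^ k ≠ 0 →
      dualQuatNorm (q * (dq ω v) ^ (k + 1)) < dualQuatNorm (q * (dq ω v) ^ k) := by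
  intro k hk
  set x := q * (dq ω v) ^ k with hx
  have hpow : q * (dq ω v) ^ (k + 1) = x * dq ω v := by
    rw [hx, pow_succ, mul_assoc]
  rw [hpow]
  set A := ‖x.fst‖ with hA
  set B := ‖x.snd‖ with hB
  set W := ‖ω‖ with hW
  set V := ‖v‖ with hV
  have hA0 : 0 ≤ A := norm_nonneg _
  have hB0 : 0 ≤ B := norm_nonneg _
  have hW0 : 0 ≤ W := norm_nonneg _
  have hV0 : 0 ≤ V := norm_nonneg _
  -- positivity of A^2 + B^2
  have hABpos : 0 < A ^ 2 + B ^ 2 := by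
    rcases eq_or_ne x.fst 0 with h1 | h1
    · rcases eq_or_ne x.snd 0 with h2 | h2
      · exact absurd (TrivSqZeroExt.ext (by simp [h1]) (by simp [h2])) hk
      · have : 0 < B := norm_pos_iff.mpr h2
        nlinarith [sq_nonneg A]
    · have : 0 < A := norm_pos_iff.mpr h1
      nlinarith [sq_nonneg B]
  have hfst : (x * dq ω v).fst = x.fst * ω := by
    rw [TrivSqZeroExt.fst_mul, dq_fst]
  have hsnd : (x * dq ω v).snd = x.fst * v + x.snd * ω := by
    rw [TrivSqZeroExt.snd_mul, dq_fst, dq_snd, smul_eq_mul, MulOpposite.smul_eq_mul_unop,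
      MulOpposite.unop_op]
  have hnfst : ‖(x * dq ω v).fst‖ = A * W := by rw [hfst, norm_mul]
  have hnsnd : ‖(x * dq ω v).snd‖ ≤ A * V + B * W := by
    rw [hsnd]
    calc ‖x.fst * v + x.snd * ω‖ ≤ ‖x.fst * v‖ + ‖x.snd * ω‖ := norm_add_le _ _
      _ = A * V + B * W := by rw [norm_mul, norm_mul]
  unfold dualQuatNorm
  apply Real.sqrt_lt_sqrt (by positivity)
  have hsnd2 : ‖(x * dq ω v).snd‖ ^ 2 ≤ (A * V + B * W) ^ 2 := by
    apply sq_le_sq' _ hnsnd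
    nlinarith [norm_nonneg (x * dq ω v).snd]
  rw [hnfst]
  nlinarith [mul_nonneg (mul_nonneg hW0 hV0) (sq_nonneg (A - B)),
    mul_nonneg hABpos.le (sq_nonneg (W - V)), mul_lt_mul_of_pos_left hn hABpos]
end

section
/- Let a, λ be real numbers with a ≠ 0, let n be a natural number with n ≥ 2, let x : ℝ → ℝ, and let t ∈ ℝ with x(t) > 0. Suppose x has derivative a · x(t)^n at t. Define ψ(y) = exp( (λ / ((1 − n) · a)) · y^(1−n) ) for y > 0, where y^(1−n) is the real power with (real) exponent 1 − n. Then the composite function s ↦ ψ(x(s)) has derivative λ · ψ(x(t)) at t; that is, ψ is a Koopman eigenfunction of the system ẋ = a xⁿ with eigenvalue λ. -/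
/-- For the scalar system `ẋ = a xⁿ` (`a ≠ 0`, `n ≥ 2`), the function
`ψ(y) = exp((λ / ((1 − n) a)) y^(1−n))` (real power with negative real exponent
`1 − n`) is a Koopman eigenfunction with eigenvalue `λ`: if `x` has derivative
`a x(t)^n` at `t` and `x(t) > 0`, then `s ↦ ψ(x(s))` has derivative
`λ ψ(x(t))` at `t`. -/
theorem koopman_eigenfunction_pow_system (a lam : ℝ) (ha : a ≠ 0)
    (n : ℕ) (hn : 2 ≤ n) (x : ℝ → ℝ) (t : ℝ) (hxt : 0 < x t)
    (hdx : HasDerivAt x (a * x t ^ n) t) :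
    HasDerivAt (fun s => Real.exp ((lam / ((1 - n) * a)) * x s ^ ((1 : ℝ) - n)))
      (lam * Real.exp ((lam / ((1 - n) * a)) * x t ^ ((1 : ℝ) - n))) t := by
  have hne : (1 - (n : ℝ)) ≠ 0 := by
    have : (2 : ℝ) ≤ n := by exact_mod_cast hn
    nlinarith
  have h1 : HasDerivAt (fun s => x s ^ ((1 : ℝ) - n))
      (a * x t ^ n * ((1 : ℝ) - n) * x t ^ (((1 : ℝ) - n) - 1)) t :=
    hdx.rpow_const (Or.inl hxt.ne')
  have h2 := (h1.const_mul (lam / ((1 - (n : ℝ)) * a))).exp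
  have hxne : x t ≠ 0 := hxt.ne'
  have hpow : x t ^ (((1 : ℝ) - n) - 1) * x t ^ n = 1 := by
    rw [← Real.rpow_natCast (x t) n, ← Real.rpow_add hxt]
    norm_num
  have h3 : lam / ((1 - (n : ℝ)) * a) * (a * x t ^ n * ((1 : ℝ) - n) * x t ^ (((1 : ℝ) - n) - 1))
      = lam := by
    have h4 : a * x t ^ n * ((1 : ℝ) - n) * x t ^ (((1 : ℝ) - n) - 1)
        = ((1 - (n : ℝ)) * a) * (x t ^ (((1 : ℝ) - n) - 1) * x t ^ n) := by ring
    rw [h4, hpow, mul_one, div_mul_cancel₀]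
    exact mul_ne_zero hne ha
  convert h2 using 1
  rw [h3, mul_comm]
end
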